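/- arXiv:1708.05999 — 2 statements merged into one kernel-verified Lean document; each statement's English description precedes it below -/
import Mathlib

section
/- For any finite sequence y_1,...,y_n of real numbers in [0,1], it holds that (1 - 1/e) · min{1, Σᵢ yᵢ} ≤ 1 - Πᵢ (1 - yᵢ) ≤ min{1, Σᵢ yᵢ}. -/
open Real

lemma aux_bernoulli (n : ℕ) (y : Fin n → ℝ) (h : ∀ i, y i ∈ Set.Icc (0:ℝ) 1) :
    1 - ∑ i, y i ≤ ∏ i, (1 - y i) := by
  induction n with
  | zero => simp
  | succ m ih =>
    have h' : ∀ i : Fin m, y i.succ ∈ Set.Icc (0:ℝ) 1 := fun i => h i.succ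
    have ih' := ih (fun i => y i.succ) h'
    rw [Fin.sum_univ_succ, Fin.prod_univ_succ]
    have h0 := h 0
    have hP0 : (0:ℝ) ≤ ∏ i : Fin m, (1 - y i.succ) :=
      Finset.prod_nonneg fun i _ => by linarith [(h' i).2]
    have hS : (0:ℝ) ≤ ∑ i : Fin m, y i.succ :=
      Finset.sum_nonneg fun i _ => (h' i).1
    nlinarith [h0.1, h0.2]

/-- Goemans–Williamson inequality: for y_i ∈ [0,1],
(1 - 1/e)·min{1, Σ yᵢ} ≤ 1 - Π (1 - yᵢ) ≤ min{1, Σ yᵢ}. -/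
theorem goemans_williamson (n : ℕ) (y : Fin n → ℝ)
    (hy : ∀ i, y i ∈ Set.Icc (0 : ℝ) 1) :
    (1 - 1 / Real.exp 1) * min 1 (∑ i, y i) ≤ 1 - ∏ i, (1 - y i) ∧
      1 - ∏ i, (1 - y i) ≤ min 1 (∑ i, y i) := by
  set S := ∑ i, y i with hS
  set P := ∏ i, (1 - y i) with hP
  have hP0 : 0 ≤ P := Finset.prod_nonneg fun i _ => by linarith [(hy i).2]
  have hS0 : 0 ≤ S := Finset.sum_nonneg fun i _ => (hy i).1
  have hber : 1 - S ≤ P := aux_bernoulli n y hy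
  have hPexp : P ≤ Real.exp (-S) := by
    rw [hP, hS, ← Finset.sum_neg_distrib, Real.exp_sum]
    exact Finset.prod_le_prod (fun i _ => by linarith [(hy i).2])
      (fun i _ => by linarith [Real.add_one_le_exp (-y i)])
  constructor
  · -- lower bound
    have key : 1 - Real.exp (-S) ≥ (1 - 1 / Real.exp 1) * min 1 S := by
      rcases le_or_gt 1 S with h1 | h1
      · rw [min_eq_left h1]
        have h2 : Real.exp (-S) ≤ Real.exp (-1) := Real.exp_le_exp.2 (by linarith)
        rw [Real.exp_neg 1] at h2
        have he : 0 < Real.exp 1 := Real.exp_pos 1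
        rw [mul_one, one_div]
        linarith
      · rw [min_eq_right (le_of_lt h1)]
        -- convexity of exp: exp(-S) ≤ (1-S)*exp 0 + S*exp(-1)
        have hc := convexOn_exp.2 (Set.mem_univ (0:ℝ)) (Set.mem_univ (-1:ℝ))
          (by linarith : (0:ℝ) ≤ 1 - S) hS0 (by ring : (1 - S) + S = 1)
        simp only [smul_eq_mul, mul_zero, mul_neg_one, zero_add, Real.exp_zero, mul_one] at hc
        have hE : Real.exp (-1) = (Real.exp 1)⁻¹ := Real.exp_neg 1
        rw [hE] at hc
        have he : 0 < Real.exp 1 := Real.exp_pos 1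
        rw [one_div]
        nlinarith [hc]
    linarith
  · exact le_min (by linarith) (by linarith)
end

section
/- Let ξ ∈ [0,1]ⁿ with Σᵢ ξᵢ = c ∈ ℕ. Define, for each i, sᵢ = Σ_{j<i} ξⱼ and tᵢ = sᵢ + ξᵢ. For z ∈ [0,1), let x(z) ∈ {0,1}ⁿ be given by x(z)ᵢ = 1 iff there exists an integer ℓ with 0 ≤ ℓ < c such that ℓ + z ∈ [sᵢ, tᵢ). Then for every z, Σᵢ x(z)ᵢ = c, and if z is uniform on [0,1), then P[x(z)ᵢ = 1] = ξᵢ for every i. -/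
open Finset MeasureTheory
open scoped Classical

/-!
The item intervals `[sᵢ, tᵢ)` tile `[0, c)`, so each of the `c` points `ℓ + z` lies in
exactly one of them, and an interval of length `ξᵢ ≤ 1` contains at most one of these points;
hence a cut selects exactly `c` items. The cuts selecting item `i` form the image of `[sᵢ, tᵢ)`
under the fractional part, which is injective there. On each unit cell `fract` is a translation,
so on a set where it is injective it preserves Lebesgue measure, and that image has measure `ξᵢ`.
-/

theorem Int.injOn_fract_Ico {R : Type*} [CommRing R] [LinearOrder R] [IsStrictOrderedRing R]
    [FloorRing R] {a b : R} (hab : b ≤ a + 1) : Set.InjOn Int.fract (Set.Ico a b) := by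
  intro x hx y hy hxy
  obtain ⟨k, hk⟩ := Int.fract_eq_fract.1 hxy
  obtain ⟨hax, hxb⟩ := hx
  obtain ⟨hay, hyb⟩ := hy
  have hk_lt : k < 1 := by
    have : (k : R) < 1 := by linarith
    exact_mod_cast this
  have hk_gt : -1 < k := by
    have : (-1 : R) < k := by linarith
    exact_mod_cast this
  obtain rfl : k = 0 := by omega
  simpa [sub_eq_zero] using hk

open Function in
theorem Real.volume_image_fract {s : Set ℝ} (hs : MeasurableSet s)
    (hinj : Set.InjOn Int.fract s) : volume (Int.fract '' s) = volume s := by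
  have hpiece (m : ℤ) : (fun x : ℝ => x - m) '' s ∩ Set.Ico 0 1
      = (· + (m : ℝ)) ⁻¹' (s ∩ Set.Ico (m : ℝ) (m + 1)) := by
    ext z
    simp only [Set.mem_inter_iff, Set.mem_image, Set.mem_preimage, Set.mem_Ico]
    constructor
    · rintro ⟨⟨x, hx, rfl⟩, h0, h1⟩
      refine ⟨by simpa using hx, ?_, ?_⟩ <;> linarith
    · rintro ⟨hz, h0, h1⟩
      exact ⟨⟨z + m, hz, by ring⟩, by linarith, by linarith⟩
  have hcells : Pairwise (Disjoint on fun m : ℤ => s ∩ Set.Ico (m : ℝ) (m + 1)) :=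
    fun m m' h => (Set.pairwise_disjoint_Ico_intCast ℝ h).mono
      Set.inter_subset_right Set.inter_subset_right
  have hpieces : Pairwise (Disjoint on
      fun m : ℤ => (· + (m : ℝ)) ⁻¹' (s ∩ Set.Ico (m : ℝ) (m + 1))) := by
    intro m m' hmm'
    refine Set.disjoint_left.2 fun z hz hz' => hmm' ?_
    have := hinj hz.1 hz'.1 (by simp only [Int.fract_add_intCast])
    exact_mod_cast add_left_cancel this
  have hmeas (m : ℤ) : MeasurableSet (s ∩ Set.Ico (m : ℝ) (m + 1)) :=
    hs.inter measurableSet_Ico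
  calc volume (Int.fract '' s)
      = ∑' m : ℤ, volume ((· + (m : ℝ)) ⁻¹' (s ∩ Set.Ico (m : ℝ) (m + 1))) := by
        simp_rw [Int.image_fract, hpiece]
        exact measure_iUnion hpieces fun m => (hmeas m).preimage (measurable_add_const _)
    _ = ∑' m : ℤ, volume (s ∩ Set.Ico (m : ℝ) (m + 1)) := by
        simp_rw [measure_preimage_add_right]
    _ = volume s := by
        rw [← measure_iUnion hcells hmeas, ← Set.inter_iUnion, iUnion_Ico_intCast,
          Set.inter_univ]

theorem setOf_exists_natCast_add_mem_eq_image_fract {S : Set ℝ} {c : ℕ}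
    (hS : S ⊆ Set.Ico 0 c) :
    {z : ℝ | z ∈ Set.Ico (0 : ℝ) 1 ∧ ∃ ℓ : ℕ, ℓ < c ∧ (ℓ : ℝ) + z ∈ S} =
      Int.fract '' S := by
  ext z
  constructor
  · rintro ⟨hz, ℓ, -, hℓ⟩
    exact ⟨ℓ + z, hℓ, by rw [Int.fract_natCast_add, Int.fract_eq_self.2 hz]⟩
  · rintro ⟨x, hx, rfl⟩
    have hx0 : 0 ≤ x := (hS hx).1
    refine ⟨⟨Int.fract_nonneg x, Int.fract_lt_one x⟩, ⌊x⌋₊,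
      (Nat.floor_lt hx0).2 (hS hx).2, ?_⟩
    rwa [natCast_floor_eq_intCast_floor hx0, Int.floor_add_fract]

theorem card_filter_exists_lt_eq_of_existsUnique {ι : Type*} [Fintype ι] {c : ℕ}
    (P : ι → ℕ → Prop) [DecidablePred fun i => ∃ ℓ, ℓ < c ∧ P i ℓ]
    (hℓ : ∀ i ℓ ℓ', P i ℓ → P i ℓ' → ℓ = ℓ')
    (hi : ∀ ℓ < c, ∃! i, P i ℓ) :
    #{i | ∃ ℓ, ℓ < c ∧ P i ℓ} = c := by
  suffices h : #{i | ∃ ℓ, ℓ < c ∧ P i ℓ} = #(range c) by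
    rwa [card_range] at h
  refine card_bij (fun i hi => (mem_filter.1 hi).2.choose) ?_ ?_ ?_
  · intro i hi
    exact mem_range.2 (mem_filter.1 hi).2.choose_spec.1
  · intro i₁ hi₁ i₂ hi₂ h
    have h₁ := (mem_filter.1 hi₁).2.choose_spec
    have h₂ := (mem_filter.1 hi₂).2.choose_spec
    rw [h] at h₁
    exact (hi _ h₁.1).unique h₁.2 h₂.2
  · intro ℓ hℓc
    obtain ⟨i, hPi, -⟩ := hi ℓ (mem_range.1 hℓc)
    have hmem : i ∈ ({i | ∃ ℓ, ℓ < c ∧ P i ℓ} : Finset ι) :=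
      mem_filter.2 ⟨mem_univ i, ℓ, mem_range.1 hℓc, hPi⟩
    exact ⟨i, hmem, hℓ i _ _ (mem_filter.1 hmem).2.choose_spec.2 hPi⟩

section PartialSums

variable {ι : Type*} [LinearOrder ι] [LocallyFiniteOrderBot ι] {ξ : ι → ℝ}

theorem sum_Iic_le_sum_Iio_of_lt (hξ : ∀ i, 0 ≤ ξ i) {i j : ι} (hij : i < j) :
    ∑ k ∈ Iic i, ξ k ≤ ∑ k ∈ Iio j, ξ k :=
  sum_le_sum_of_subset_of_nonneg (fun _ hk => mem_Iio.2 ((mem_Iic.1 hk).trans_lt hij))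
    fun k _ _ => hξ k

theorem existsUnique_mem_Ico_sum_Iio_sum_Iic [Fintype ι] (hξ : ∀ i, 0 ≤ ξ i) {y : ℝ}
    (hy₀ : 0 ≤ y) (hy : y < ∑ i, ξ i) :
    ∃! i, y ∈ Set.Ico (∑ j ∈ Iio i, ξ j) (∑ j ∈ Iic i, ξ j) := by
  refine existsUnique_of_exists_of_unique ?_ ?_
  · have hne : (univ : Finset ι).Nonempty := by
      by_contra h
      rw [not_nonempty_iff_eq_empty.1 h, sum_empty] at hy
      linarith
    have htop : Iic (univ.max' hne) = univ := by
      ext j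
      simpa using le_max' _ j (mem_univ j)
    set T : Finset ι := {i | y < ∑ j ∈ Iic i, ξ j}
    have hT : T.Nonempty := ⟨univ.max' hne, by simpa [T, htop] using hy⟩
    have hmin : y < ∑ j ∈ Iic (T.min' hT), ξ j := (mem_filter.1 (T.min'_mem hT)).2
    -- otherwise the predecessor of the least such `i` would also qualify
    refine ⟨T.min' hT, ?_, hmin⟩
    by_contra! h
    have hIio : (Iio (T.min' hT)).Nonempty := by
      by_contra h'
      rw [not_nonempty_iff_eq_empty.1 h', sum_empty] at h
      linarith
    have hpred : Iic ((Iio (T.min' hT)).max' hIio) = Iio (T.min' hT) := by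
      ext j
      simp only [mem_Iic]
      exact ⟨fun hj => mem_Iio.2 (hj.trans_lt (mem_Iio.1 (max'_mem _ hIio))),
        fun hj => le_max' _ j hj⟩
    have := T.min'_le _ (mem_filter.2 ⟨mem_univ _, (hpred ▸ h : y < _)⟩)
    exact (mem_Iio.1 (max'_mem _ hIio)).not_ge this
  · intro i j hi hj
    by_contra hne
    rcases lt_or_gt_of_ne hne with h | h
    · linarith [sum_Iic_le_sum_Iio_of_lt hξ h, hi.2, hj.1]
    · linarith [sum_Iic_le_sum_Iio_of_lt hξ h, hi.1, hj.2]

end PartialSums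

/-- Correctness of the space-filling placement algorithm: with partial sums
sᵢ = Σ_{j<i} ξⱼ and tᵢ = sᵢ + ξᵢ, every cut z ∈ [0,1) selects exactly c items,
and a uniform cut selects item i with probability ξᵢ. -/
theorem space_filling_placement {n : ℕ} (c : ℕ) (ξ : Fin n → ℝ)
    (hξ : ∀ i, ξ i ∈ Set.Icc (0 : ℝ) 1)
    (hsum : (∑ i, ξ i) = (c : ℝ)) :
    let s : Fin n → ℝ := fun i => ∑ j ∈ Finset.univ.filter (fun j => j < i), ξ j
    let t : Fin n → ℝ := fun i => s i + ξ i
    (∀ z : ℝ, z ∈ Set.Ico (0 : ℝ) 1 →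
      (∑ i, (if ∃ ℓ : ℕ, ℓ < c ∧ ((ℓ : ℝ) + z) ∈ Set.Ico (s i) (t i)
              then (1 : ℕ) else 0)) = c) ∧
    (∀ i : Fin n,
      volume {z : ℝ | z ∈ Set.Ico (0 : ℝ) 1 ∧
          ∃ ℓ : ℕ, ℓ < c ∧ ((ℓ : ℝ) + z) ∈ Set.Ico (s i) (t i)} =
        ENNReal.ofReal (ξ i)) := by
  intro s t
  have hξ₀ (i : Fin n) : 0 ≤ ξ i := (hξ i).1
  have hs (i : Fin n) : s i = ∑ j ∈ Iio i, ξ j := by simp only [s, filter_gt_eq_Iio]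
  have ht (i : Fin n) : t i = ∑ j ∈ Iic i, ξ j := by rw [← sum_Iio_add_eq_sum_Iic, ← hs]
  have hinj (i : Fin n) : Set.InjOn Int.fract (Set.Ico (s i) (t i)) :=
    Int.injOn_fract_Ico (add_le_add_right (hξ i).2 _)
  have hsub (i : Fin n) : Set.Ico (s i) (t i) ⊆ Set.Ico 0 c := by
    rw [hs, ht, ← hsum]
    exact Set.Ico_subset_Ico (sum_nonneg fun j _ => hξ₀ j)
      (sum_le_sum_of_subset_of_nonneg (subset_univ _) fun j _ _ => hξ₀ j)
  refine ⟨fun z hz => ?_, fun i => ?_⟩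
  · rw [sum_boole, Nat.cast_id]
    refine card_filter_exists_lt_eq_of_existsUnique
      (fun i (ℓ : ℕ) => (ℓ : ℝ) + z ∈ Set.Ico (s i) (t i))
      (fun i ℓ ℓ' h h' => ?_) fun ℓ hℓ => ?_
    · have := hinj i h h' (by rw [Int.fract_natCast_add, Int.fract_natCast_add])
      exact_mod_cast add_right_cancel this
    · simp only [hs, ht]
      refine existsUnique_mem_Ico_sum_Iio_sum_Iic hξ₀ (add_nonneg ℓ.cast_nonneg hz.1) ?_
      rw [hsum]
      have : (ℓ : ℝ) + 1 ≤ c := by exact_mod_cast hℓ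
      linarith [hz.2]
  · rw [setOf_exists_natCast_add_mem_eq_image_fract (hsub i),
      Real.volume_image_fract measurableSet_Ico (hinj i), Real.volume_Ico, add_sub_cancel_left]
end
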